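/- If the edge-probability function satisfies p(n) ≥ ln n / n, then with high probability a graph G sampled from G(n,p) has the property that every vertex set U with |U| ≤ n^{0.11}·ln n spans at most (np)^{3/25}·|U| edges, i.e. e_G(U) ≤ (np)^{3/25}·|U|. -/

import Mathlib

open Filter Finset SimpleGraph
open scoped Classical

/-- The probability weight of a particular graph `G` on `[n]` under `G(n,p)`. -/
noncomputable def gnpWeight (n : ℕ) (p : ℝ) (G : SimpleGraph (Fin n)) : ℝ :=
  p ^ G.edgeFinset.card * (1 - p) ^ (n.choose 2 - G.edgeFinset.card)

/-- The probability that a random graph `G ~ G(n,p)` satisfies the predicate `A`. -/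
noncomputable def gnpProb (n : ℕ) (p : ℝ) (A : SimpleGraph (Fin n) → Prop) : ℝ :=
  ∑ G : SimpleGraph (Fin n), if A G then gnpWeight n p G else 0

/-- A sequence of graph properties holds with high probability in `G(n, p n)`. -/
def WHP (p : ℕ → ℝ) (A : ∀ n : ℕ, SimpleGraph (Fin n) → Prop) : Prop :=
  Tendsto (fun n => gnpProb n (p n) (A n)) atTop (nhds 1)

/-- Number of edges of a graph. -/
noncomputable def edgeCount {V : Type*} [Fintype V] (G : SimpleGraph V) : ℕ :=
  G.edgeFinset.card

/-- Number of edges with both endpoints in `U`. -/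
noncomputable def eIn {V : Type*} [Fintype V] (G : SimpleGraph V) (U : Finset V) : ℕ :=
  (G.edgeFinset.filter (fun e => ∀ v ∈ e, v ∈ U)).card

/-- Number of edges with one endpoint in `U` and the other in `Z` (for disjoint `U`, `Z`). -/
noncomputable def eBetween {V : Type*} [Fintype V] (G : SimpleGraph V) (U Z : Finset V) : ℕ :=
  ((U ×ˢ Z).filter (fun q => G.Adj q.1 q.2)).card

/-- External neighbourhood of a vertex set. -/
noncomputable def extNbhd {V : Type*} [Fintype V] (G : SimpleGraph V) (U : Finset V) : Finset V :=
  Finset.univ.filter (fun v => v ∉ U ∧ ∃ u ∈ U, G.Adj u v)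

/-- `G` is an `(R, f)`-expander: every set `U` with `|U| ≤ R` satisfies `|N(U)| ≥ f(|U|)·|U|`. -/
def IsExpander {V : Type*} [Fintype V] (G : SimpleGraph V) (R : ℝ) (f : ℕ → ℝ) : Prop :=
  ∀ U : Finset V, U.Nonempty → (U.card : ℝ) ≤ R →
    f U.card * U.card ≤ ((extNbhd G U).card : ℝ)

/-- The expansion function `f_β` on `{1, …, ⌊β n₁⌋}`. -/
noncomputable def fBeta (β : ℝ) (n1 : ℕ) (t : ℕ) : ℝ :=
  if t = Nat.floor (β * n1) then 2 * (1 + 39 * β) / (3 * β)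
  else if (t : ℝ) < (n1 : ℝ) ^ (0.1 : ℝ) then Real.log n1 ^ (0.8 : ℝ)
  else 11

/-- `G₁` is `(n₁, d, β)`-quasi-random. -/
def QuasiRandom {V : Type*} [Fintype V] (G1 : SimpleGraph V) (n1 : ℕ) (d β : ℝ) : Prop :=
  (∀ v : V, d / 150 ≤ (G1.degree v : ℝ)) ∧
  (∀ U : Finset V, (U.card : ℝ) < (n1 : ℝ) ^ (0.11 : ℝ) * Real.log n1 →
    (eIn G1 U : ℝ) ≤ d ^ (0.13 : ℝ) * U.card) ∧
  (∀ U : Finset V, (U.card : ℝ) < 12 * β * n1 →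
    (eIn G1 U : ℝ) ≤ 50 * β * d * U.card) ∧
  (∀ U Z : Finset V, Disjoint U Z → U.card = Nat.floor (β * n1) →
    Z.card = Nat.floor ((1 / 3 - 27 * β) * n1) →
    (n1 : ℝ) * Real.log (Real.log n1) ≤ (eBetween G1 U Z : ℝ))

/-- Longest path length in `G`. -/
noncomputable def longestPath {V : Type*} [Fintype V] (G : SimpleGraph V) : ℕ :=
  sSup {l : ℕ | ∃ (u v : V) (q : G.Walk u v), q.IsPath ∧ q.length = l}

/-- `{u, v}` is a booster with respect to `Γ`. -/
def IsBooster {V : Type*} [Fintype V] (Γ : SimpleGraph V) (u v : V) : Prop :=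
  u ≠ v ∧ ¬ Γ.Adj u v ∧
    ((Γ ⊔ fromEdgeSet {s(u, v)}).IsHamiltonian ∨
      longestPath Γ < longestPath (Γ ⊔ fromEdgeSet {s(u, v)}))

/-- The booster set `B_Γ(v)`. -/
noncomputable def boosterSet {V : Type*} [Fintype V] (Γ : SimpleGraph V) (v : V) : Finset V :=
  Finset.univ.filter (fun w => IsBooster Γ v w)

/-- Membership in the family `𝓛(n, β)` with witnessing partition `V = V₁ ∪ D`. -/
def InFamilyL (n : ℕ) (β : ℝ) (G : SimpleGraph (Fin n)) (V1 D : Finset (Fin n)) : Prop :=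
  Disjoint V1 D ∧ V1 ∪ D = Finset.univ ∧
  ((D.card : ℝ) ≤ (n : ℝ) ^ (0.09 : ℝ)) ∧
  (∀ u ∈ D, 2 ≤ (G.neighborFinset u ∩ V1).card) ∧
  (∀ u ∈ D, ∀ v ∈ D, ∀ q : G.Walk u v, q.IsPath → 0 < q.length →
    2 * Real.log n / (3 * Real.log (Real.log n)) < (q.length : ℝ)) ∧
  (∀ u ∈ D, ∀ q : G.Walk u u, q.IsCycle →
    2 * Real.log n / (3 * Real.log (Real.log n)) < (q.length : ℝ)) ∧
  IsExpander (G.induce (V1 : Set (Fin n))) (β * V1.card) (fBeta β V1.card)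

/-!
First moment method. For a fixed `U` with `|U| = u` and `k = (np)^{3/25}`, the chance that `U`
spans more than `k u` edges is at most `C(u², t) p^t ≤ (e u p / k)^t` with `t > k u`. Since
`p ≥ ln n / n` we have `k ≥ (ln n)^{3/25} ≥ 600`, and for `u ≤ n^{0.11} ln n` the base is at most
`n^{0.11 + 0.005 - 3/25} = n^{-0.005}`, so the chance is at most `n^{-3u}`. Summing over all
nonempty `U` gives at most `(1 + n^{-3})^n - 1 ≤ exp (n^{-2}) - 1 → 0`.
-/

lemma sum_simpleGraph_eq_sum_powerset {V β : Type*} [Fintype V] [DecidableEq V] [AddCommMonoid β]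
    (f : Finset (Sym2 V) → β) :
    ∑ G : SimpleGraph V, f G.edgeFinset = ∑ s ∈ (⊤ : SimpleGraph V).edgeFinset.powerset, f s := by
  refine sum_nbij' (fun G => G.edgeFinset) (fun s => fromEdgeSet (s : Set (Sym2 V)))
    (fun G _ => mem_powerset.2 (edgeFinset_mono le_top)) (fun _ _ => mem_univ _)
    (fun G _ => by simp) (fun s hs => ?_) (fun _ _ => rfl)
  have hdiag : ∀ e ∈ s, ¬ e.IsDiag := fun e he =>
    not_isDiag_of_mem_edgeSet _ (mem_edgeFinset.1 (mem_powerset.1 hs he))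
  ext e
  simp only [mem_edgeFinset, edgeSet_fromEdgeSet, Set.mem_sdiff, mem_coe]
  exact ⟨And.left, fun he => ⟨he, hdiag e he⟩⟩

lemma eIn_eq_card_filter {V : Type*} [Fintype V] (G : SimpleGraph V) [Fintype G.edgeSet]
    (U : Finset V) [DecidablePred fun e : Sym2 V => ∀ v ∈ e, v ∈ U] :
    eIn G U = #(G.edgeFinset.filter fun e => ∀ v ∈ e, v ∈ U) := by
  unfold eIn
  convert rfl

lemma eIn_le_card_sq {V : Type*} [Fintype V] (G : SimpleGraph V) (U : Finset V) :
    eIn G U ≤ #U ^ 2 := by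
  have hsub : G.edgeFinset.filter (fun e => ∀ v ∈ e, v ∈ U) ⊆
      (U ×ˢ U).image (fun q => s(q.1, q.2)) := by
    intro e he
    induction e with
    | h a b =>
      have hab := (mem_filter.1 he).2
      exact mem_image.2 ⟨(a, b), mem_product.2 ⟨hab a (Sym2.mem_mk_left a b),
        hab b (Sym2.mem_mk_right a b)⟩, rfl⟩
  calc eIn G U ≤ #((U ×ˢ U).image (fun q => s(q.1, q.2))) := card_le_card hsub
    _ ≤ #(U ×ˢ U) := card_image_le
    _ = #U ^ 2 := by rw [card_product, sq]

lemma choose_mul_pow_le (M t : ℕ) {p : ℝ} (hp : 0 ≤ p) :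
    (M.choose t : ℝ) * p ^ t ≤ (Real.exp 1 * M * p / t) ^ t := by
  rcases Nat.eq_zero_or_pos t with rfl | ht
  · simp
  have htt : (0 : ℝ) < (t : ℝ) ^ t := by positivity
  calc (M.choose t : ℝ) * p ^ t ≤ (M : ℝ) ^ t / t.factorial * p ^ t := by
        gcongr
        exact Nat.choose_le_pow_div t M
    _ = (M * p / t) ^ t * ((t : ℝ) ^ t / t.factorial) := by
        rw [div_pow, mul_pow]
        field_simp
    _ ≤ (M * p / t) ^ t * Real.exp 1 ^ t := by
        gcongr
        rw [Real.exp_one_pow]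
        exact Real.pow_div_factorial_le_exp _ (Nat.cast_nonneg t) t
    _ = (Real.exp 1 * M * p / t) ^ t := by
        rw [← mul_pow]
        ring

lemma pow_le_rpow_neg_of_le_rpow_neg {x r c a : ℝ} {t : ℕ} (hx : 1 ≤ x) (hr0 : 0 ≤ r)
    (hr : r ≤ x ^ (-c)) (ha : a ≤ c * t) : r ^ t ≤ x ^ (-a) :=
  calc r ^ t ≤ (x ^ (-c)) ^ t := pow_le_pow_left₀ hr0 hr t
    _ = x ^ (-c * t) := by rw [← Real.rpow_natCast, ← Real.rpow_mul (by linarith)]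
    _ ≤ x ^ (-a) := Real.rpow_le_rpow_of_exponent_le hx (by linarith)

lemma exp_one_mul_mul_div_rpow_le {x u p a b c : ℝ} (hx : 0 < x) (hp0 : 0 < p) (hp1 : p ≤ 1)
    (ha : a ≤ 1) (hu : u ≤ x ^ b * Real.log x) (hlog : Real.exp 1 * Real.log x ≤ x ^ c) :
    Real.exp 1 * u * p / (x * p) ^ a ≤ x ^ (b + c - a) := by
  have hu' : Real.exp 1 * u ≤ x ^ (b + c) :=
    calc Real.exp 1 * u ≤ Real.exp 1 * (x ^ b * Real.log x) := by gcongr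
      _ = x ^ b * (Real.exp 1 * Real.log x) := by ring
      _ ≤ x ^ b * x ^ c := by gcongr
      _ = x ^ (b + c) := (Real.rpow_add hx b c).symm
  have hpa : p ≤ p ^ a := by
    simpa using Real.rpow_le_rpow_of_exponent_ge hp0 hp1 ha
  rw [div_le_iff₀ (by positivity), Real.mul_rpow hx.le hp0.le]
  calc Real.exp 1 * u * p ≤ x ^ (b + c) * p := by gcongr
    _ ≤ x ^ (b + c) * p ^ a := by gcongr
    _ = x ^ (b + c - a) * (x ^ a * p ^ a) := by
        rw [← mul_assoc, ← Real.rpow_add hx, sub_add_cancel]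

lemma sum_pow_card_le_one_add_pow_sub_one {α : Type*} [Fintype α] {I : Finset (Finset α)}
    (hI : ∀ U ∈ I, U.Nonempty) {x : ℝ} (hx : 0 ≤ x) :
    ∑ U ∈ I, x ^ #U ≤ (1 + x) ^ Fintype.card α - 1 := by
  have hall : ∑ U : Finset α, x ^ #U = (1 + x) ^ Fintype.card α := by
    simpa [add_comm] using Fintype.sum_pow_mul_eq_add_pow α x 1
  have hsub : I ⊆ univ.erase ∅ := fun U hU =>
    mem_erase.2 ⟨(hI U hU).ne_empty, mem_univ U⟩
  calc ∑ U ∈ I, x ^ #U ≤ ∑ U ∈ univ.erase ∅, x ^ #U :=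
        sum_le_sum_of_subset_of_nonneg hsub fun _ _ _ => by positivity
    _ = (1 + x) ^ Fintype.card α - 1 := by
        rw [← hall, ← add_sum_erase univ _ (mem_univ ∅), card_empty, pow_zero, add_sub_cancel_left]

lemma eventually_exp_one_mul_log_le_rpow {c : ℝ} (hc : 0 < c) :
    ∀ᶠ n : ℕ in atTop, Real.exp 1 * Real.log n ≤ (n : ℝ) ^ c := by
  have hbound := (isLittleO_log_rpow_atTop hc).bound (inv_pos.2 (Real.exp_pos 1))
  refine (tendsto_natCast_atTop_atTop (R := ℝ)).eventually
    (p := fun x => Real.exp 1 * Real.log x ≤ x ^ c) ?_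
  filter_upwards [hbound, eventually_ge_atTop 1] with x hx hx1
  rw [Real.norm_of_nonneg (Real.log_nonneg hx1),
    Real.norm_of_nonneg (Real.rpow_nonneg (by linarith) c)] at hx
  calc Real.exp 1 * Real.log x ≤ Real.exp 1 * ((Real.exp 1)⁻¹ * x ^ c) := by gcongr
    _ = x ^ c := by field_simp

lemma eventually_le_log_rpow {a : ℝ} (ha : 0 < a) (K : ℝ) :
    ∀ᶠ n : ℕ in atTop, K ≤ Real.log n ^ a :=
  ((tendsto_rpow_atTop ha).comp
    (Real.tendsto_log_atTop.comp tendsto_natCast_atTop_atTop)).eventually_ge_atTop K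

lemma tendsto_exp_mul_rpow_neg_three_sub_one :
    Tendsto (fun n : ℕ => Real.exp (n * (n : ℝ) ^ (-3 : ℝ)) - 1) atTop (nhds 0) := by
  have hsq : Tendsto (fun n : ℕ => (n : ℝ) * (n : ℝ) ^ (-3 : ℝ)) atTop (nhds 0) := by
    refine ((tendsto_rpow_neg_atTop (two_pos : (0 : ℝ) < 2)).comp
      tendsto_natCast_atTop_atTop).congr' ?_
    filter_upwards [eventually_gt_atTop 0] with n hn
    rw [Function.comp_apply, ← Real.rpow_one_add' (Nat.cast_nonneg n) (by norm_num)]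
    norm_num
  simpa using ((Real.continuous_exp.tendsto 0).comp hsq).sub_const 1

section BinomialRandomGraph

variable {n : ℕ} {p : ℝ}

lemma gnpWeight_nonneg (hp0 : 0 ≤ p) (hp1 : p ≤ 1) (G : SimpleGraph (Fin n)) :
    0 ≤ gnpWeight n p G := by
  have : 0 ≤ 1 - p := sub_nonneg.2 hp1
  unfold gnpWeight
  positivity

lemma gnpProb_nonneg (hp0 : 0 ≤ p) (hp1 : p ≤ 1) (A : SimpleGraph (Fin n) → Prop) :
    0 ≤ gnpProb n p A :=
  sum_nonneg fun G _ => by split_ifs <;> simp [gnpWeight_nonneg hp0 hp1 G]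

lemma gnpProb_congr {A B : SimpleGraph (Fin n) → Prop} (h : ∀ G, A G ↔ B G) :
    gnpProb n p A = gnpProb n p B :=
  sum_congr rfl fun G _ => if_congr (h G) rfl rfl

lemma gnpProb_le_sum (hp0 : 0 ≤ p) (hp1 : p ≤ 1) {ι : Type*} (I : Finset ι)
    (A : SimpleGraph (Fin n) → Prop) (B : ι → SimpleGraph (Fin n) → Prop)
    (h : ∀ G, A G → ∃ i ∈ I, B i G) :
    gnpProb n p A ≤ ∑ i ∈ I, gnpProb n p (B i) := by
  unfold gnpProb
  rw [sum_comm]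
  refine sum_le_sum fun G _ => ?_
  have hterm : ∀ i, 0 ≤ if B i G then gnpWeight n p G else 0 := fun i => by
    split_ifs <;> simp [gnpWeight_nonneg hp0 hp1 G]
  split_ifs with hA
  · obtain ⟨i, hi, hBi⟩ := h G hA
    exact (if_pos hBi).symm.le.trans (single_le_sum (fun j _ => hterm j) hi)
  · exact sum_nonneg fun i _ => hterm i

lemma gnpProb_subset_edgeFinset (S : Finset (Sym2 (Fin n)))
    (hS : S ⊆ (⊤ : SimpleGraph (Fin n)).edgeFinset) :
    gnpProb n p (fun G => S ⊆ G.edgeFinset) = p ^ #S := by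
  set E := (⊤ : SimpleGraph (Fin n)).edgeFinset
  have hE : #E = n.choose 2 := by
    rw [card_edgeFinset_top_eq_card_choose_two, Fintype.card_fin]
  -- Expand `∏ e ∈ E, (p + g e)` where `g` vanishes on `S` and is `1 - p` off `S`:
  -- only the subsets `s ⊇ S` survive, each with its `G(n,p)` weight.
  let g : Sym2 (Fin n) → ℝ := fun e => if e ∈ S then 0 else 1 - p
  have hprod : ∏ e ∈ E, (p + g e) = p ^ #S := by
    have hin : ∀ e ∈ E.filter (· ∈ S), p + g e = p := fun e he => by
      simp [g, (mem_filter.1 he).2]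
    have hout : ∀ e ∈ E.filter (· ∉ S), p + g e = 1 := fun e he => by
      simp [g, (mem_filter.1 he).2]
    rw [← prod_filter_mul_prod_filter_not E (· ∈ S), prod_congr rfl hin, prod_congr rfl hout,
      prod_const, prod_const_one, mul_one, filter_mem_eq_inter, inter_eq_right.2 hS]
  rw [← hprod, prod_add, gnpProb]
  refine Eq.trans ?_
    (sum_simpleGraph_eq_sum_powerset fun s => (∏ e ∈ s, p) * ∏ e ∈ E \ s, g e)
  refine sum_congr rfl fun G _ => ?_
  have hsub : G.edgeFinset ⊆ E := edgeFinset_mono le_top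
  rw [prod_const, gnpWeight, ← hE, ← card_sdiff_of_subset hsub]
  split_ifs with hSG
  · rw [prod_congr rfl fun e he => if_neg fun heS => (mem_sdiff.1 he).2 (hSG heS), prod_const]
  · obtain ⟨e, heS, heG⟩ := not_subset.1 hSG
    rw [prod_eq_zero (mem_sdiff.2 ⟨hS heS, heG⟩) (by simp [g, heS]), mul_zero]

lemma gnpProb_add_gnpProb_not (A : SimpleGraph (Fin n) → Prop) :
    gnpProb n p A + gnpProb n p (fun G => ¬ A G) = 1 := by
  have htotal := gnpProb_subset_edgeFinset (n := n) (p := p) ∅ (empty_subset _)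
  simp only [empty_subset, card_empty, pow_zero] at htotal
  rw [← htotal, gnpProb, gnpProb, gnpProb, ← sum_add_distrib]
  exact sum_congr rfl fun G _ => by by_cases hA : A G <;> simp [hA]

lemma whp_iff_tendsto_gnpProb_not (p : ℕ → ℝ) (A : ∀ n : ℕ, SimpleGraph (Fin n) → Prop) :
    WHP p A ↔ Tendsto (fun n => gnpProb n (p n) (fun G => ¬ A n G)) atTop (nhds 0) := by
  have h : ∀ n, gnpProb n (p n) (A n) = 1 - gnpProb n (p n) (fun G => ¬ A n G) := fun n =>
    eq_sub_of_add_eq (gnpProb_add_gnpProb_not (A n))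
  simp only [WHP, h]
  constructor <;> intro hlim <;> simpa using (tendsto_const_nhds (x := (1 : ℝ))).sub hlim

lemma gnpProb_le_choose_mul_pow (hp0 : 0 ≤ p) (hp1 : p ≤ 1) (P : Sym2 (Fin n) → Prop)
    [DecidablePred P] (t : ℕ) :
    gnpProb n p (fun G => t ≤ #(G.edgeFinset.filter P))
      ≤ (#((⊤ : SimpleGraph (Fin n)).edgeFinset.filter P)).choose t * p ^ t := by
  set F := (⊤ : SimpleGraph (Fin n)).edgeFinset.filter P
  calc gnpProb n p (fun G => t ≤ #(G.edgeFinset.filter P))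
      ≤ ∑ S ∈ F.powersetCard t, gnpProb n p (fun G => S ⊆ G.edgeFinset) := by
        refine gnpProb_le_sum hp0 hp1 _ _ _ fun G hG => ?_
        obtain ⟨S, hSsub, hScard⟩ := exists_subset_card_eq hG
        refine ⟨S, mem_powersetCard.2 ⟨hSsub.trans ?_, hScard⟩, hSsub.trans (filter_subset _ _)⟩
        exact filter_subset_filter P (edgeFinset_mono le_top)
    _ = (#F).choose t * p ^ t := by
        rw [sum_congr rfl fun S hS => by
          rw [gnpProb_subset_edgeFinset S ((mem_powersetCard.1 hS).1.trans (filter_subset _ _)),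
            (mem_powersetCard.1 hS).2], sum_const, card_powersetCard, nsmul_eq_mul]

lemma gnpProb_mul_card_lt_eIn_le (hp0 : 0 ≤ p) (hp1 : p ≤ 1) {k c : ℝ} (hn : 1 ≤ n)
    (hk : 0 < k) (hck : 3 ≤ c * k) (U : Finset (Fin n))
    (hU : Real.exp 1 * #U * p / k ≤ (n : ℝ) ^ (-c)) :
    gnpProb n p (fun G => k * #U < eIn G U) ≤ ((n : ℝ) ^ (-3 : ℝ)) ^ #U := by
  set u := #U
  set M := #((⊤ : SimpleGraph (Fin n)).edgeFinset.filter fun e => ∀ v ∈ e, v ∈ U)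
  have hM : (M : ℝ) ≤ u ^ 2 := by exact_mod_cast eIn_eq_card_filter ⊤ U ▸ eIn_le_card_sq ⊤ U
  set t := ⌊k * u⌋₊ + 1
  have hkt : k * u < t := by simpa [t] using Nat.lt_floor_add_one (k * u)
  have ht : (0 : ℝ) < t := by positivity
  have hc : 0 ≤ c := by nlinarith
  have hevent : ∀ G : SimpleGraph (Fin n),
      k * u < eIn G U ↔ t ≤ #(G.edgeFinset.filter fun e => ∀ v ∈ e, v ∈ U) := fun G => by
    rw [eIn_eq_card_filter, Nat.add_one_le_iff, Nat.floor_lt (by positivity)]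
  have hMk : (M : ℝ) * k ≤ u * t :=
    calc (M : ℝ) * k ≤ u ^ 2 * k := by gcongr
      _ = u * (k * u) := by ring
      _ ≤ u * t := by gcongr
  have hr : Real.exp 1 * M * p / t ≤ (n : ℝ) ^ (-c) := by
    refine le_trans ?_ hU
    rw [div_le_div_iff₀ ht hk]
    calc Real.exp 1 * M * p * k = Real.exp 1 * p * (M * k) := by ring
      _ ≤ Real.exp 1 * p * (u * t) := by gcongr
      _ = Real.exp 1 * u * p * t := by ring
  have h3u : 3 * (u : ℝ) ≤ c * t :=
    calc 3 * (u : ℝ) ≤ c * k * u := by gcongr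
      _ = c * (k * u) := by ring
      _ ≤ c * t := by gcongr
  calc gnpProb n p (fun G => k * u < eIn G U)
        = gnpProb n p (fun G => t ≤ #(G.edgeFinset.filter fun e => ∀ v ∈ e, v ∈ U)) :=
          gnpProb_congr hevent
    _ ≤ (M.choose t : ℝ) * p ^ t := gnpProb_le_choose_mul_pow hp0 hp1 _ t
    _ ≤ (Real.exp 1 * M * p / t) ^ t := choose_mul_pow_le M t hp0
    _ ≤ (n : ℝ) ^ (-(3 * u : ℝ)) :=
        pow_le_rpow_neg_of_le_rpow_neg (by exact_mod_cast hn) (by positivity) hr h3u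
    _ = ((n : ℝ) ^ (-3 : ℝ)) ^ u := by
        rw [neg_mul_eq_neg_mul, Real.rpow_mul (Nat.cast_nonneg n), Real.rpow_natCast]

lemma gnpProb_not_forall_eIn_le (hp0 : 0 ≤ p) (hp1 : p ≤ 1) {k c m : ℝ} (hn : 1 ≤ n)
    (hk : 0 < k) (hck : 3 ≤ c * k)
    (hm : ∀ u : ℕ, (u : ℝ) ≤ m → Real.exp 1 * u * p / k ≤ (n : ℝ) ^ (-c)) :
    gnpProb n p (fun G => ¬ ∀ U : Finset (Fin n), (#U : ℝ) ≤ m → (eIn G U : ℝ) ≤ k * #U)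
      ≤ Real.exp (n * (n : ℝ) ^ (-3 : ℝ)) - 1 := by
  set x := (n : ℝ) ^ (-3 : ℝ)
  have hx : 0 ≤ x := by positivity
  set I := univ.filter fun U : Finset (Fin n) => U.Nonempty ∧ (#U : ℝ) ≤ m
  have hcover : ∀ G : SimpleGraph (Fin n),
      (¬ ∀ U : Finset (Fin n), (#U : ℝ) ≤ m → (eIn G U : ℝ) ≤ k * #U) →
        ∃ U ∈ I, k * #U < eIn G U := fun G hG => by
    push Not at hG
    obtain ⟨U, hUm, hUe⟩ := hG
    refine ⟨U, mem_filter.2 ⟨mem_univ U, nonempty_iff_ne_empty.2 ?_, hUm⟩, hUe⟩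
    rintro rfl
    have := eIn_le_card_sq G ∅
    simp_all
  calc _ ≤ ∑ U ∈ I, gnpProb n p (fun G => k * #U < eIn G U) :=
        gnpProb_le_sum hp0 hp1 I _ _ hcover
    _ ≤ ∑ U ∈ I, x ^ #U := sum_le_sum fun U hU =>
        gnpProb_mul_card_lt_eIn_le hp0 hp1 hn hk hck U (hm _ (mem_filter.1 hU).2.2)
    _ ≤ (1 + x) ^ Fintype.card (Fin n) - 1 :=
        sum_pow_card_le_one_add_pow_sub_one (fun U hU => (mem_filter.1 hU).2.1) hx
    _ ≤ Real.exp (n * x) - 1 := by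
        rw [Fintype.card_fin, Real.exp_nat_mul]
        gcongr
        linarith [Real.add_one_le_exp x]

end BinomialRandomGraph

theorem stmt12_general (p : ℕ → ℝ) (hp1 : ∀ n, p n ≤ 1)
    (hp : ∀ n : ℕ, Real.log n / n ≤ p n) :
    WHP p (fun n G => ∀ U : Finset (Fin n),
      (U.card : ℝ) ≤ (n : ℝ) ^ (0.11 : ℝ) * Real.log n →
      (eIn G U : ℝ) ≤ ((n : ℝ) * p n) ^ ((3 : ℝ) / 25) * U.card) := by
  rw [whp_iff_tendsto_gnpProb_not]
  have hp0 : ∀ n, 0 ≤ p n := fun n => (by positivity : 0 ≤ Real.log n / n).trans (hp n)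
  refine squeeze_zero' (.of_forall fun n => gnpProb_nonneg (hp0 n) (hp1 n) _) ?_
    tendsto_exp_mul_rpow_neg_three_sub_one
  filter_upwards [eventually_ge_atTop 2, eventually_le_log_rpow (a := 3 / 25) (by norm_num) 600,
    eventually_exp_one_mul_log_le_rpow (c := 0.005) (by norm_num)] with n hn hk hlog
  have hn0 : (0 : ℝ) < n := by positivity
  have hlogn : 0 < Real.log n := Real.log_pos (by exact_mod_cast hn)
  have hnp : Real.log n ≤ n * p n := by
    rw [mul_comm]
    exact (div_le_iff₀ hn0).1 (hp n)
  have hpn : 0 < p n := (div_pos hlogn hn0).trans_le (hp n)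
  have hk' : 600 ≤ ((n : ℝ) * p n) ^ ((3 : ℝ) / 25) :=
    hk.trans (Real.rpow_le_rpow hlogn.le hnp (by norm_num))
  refine gnpProb_not_forall_eIn_le (hp0 n) (hp1 n) (c := 0.005) (by omega) (by linarith)
    (by linarith) fun u hu => ?_
  exact (exp_one_mul_mul_div_rpow_le (a := 3 / 25) hn0 hpn (hp1 n) (by norm_num) hu hlog).trans_eq
    (by norm_num)

/-- Claim 4.6: for `p ≥ ln n / n`, w.h.p. every vertex set `U` with `|U| ≤ n^{0.11} ln n`
spans at most `(np)^{3/25} |U|` edges. -/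
theorem stmt12 (p : ℕ → ℝ) (hp0 : ∀ n, 0 ≤ p n) (hp1 : ∀ n, p n ≤ 1)
    (hp : ∀ n : ℕ, Real.log n / n ≤ p n) :
    WHP p (fun n G => ∀ U : Finset (Fin n),
      (U.card : ℝ) ≤ (n : ℝ) ^ (0.11 : ℝ) * Real.log n →
      (eIn G U : ℝ) ≤ ((n : ℝ) * p n) ^ ((3 : ℝ) / 25) * U.card) :=
  stmt12_general p hp1 hp
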